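/- Let ω₁, ω₂ ∈ ℝ be such that none of ω₁, 3ω₁, ω₁ + 2ω₂, ω₁ − 2ω₂ belongs to 2πℤ. Then there exists a polynomial function S : ℝ⁴ → ℝ of degree at most 3 such that S(x) − S(M(ω₁,ω₂)⁻¹ x) = V(x) for all x ∈ ℝ⁴, where V(x) = −x₁³/3 + x₁x₃² and M(ω₁,ω₂) is the 4×4 block-diagonal matrix with 2×2 blocks [[cos ω₁, −sin ω₁],[sin ω₁, cos ω₁]] and [[cos ω₂, −sin ω₂],[sin ω₂, cos ω₂]]. -/
import Mathlib

open Real MvPolynomial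

private lemma key_hom (C S r i r' i' : ℝ) (h : S^2 + C^2 = 1) (hC : C ≠ 1)
    (hr : r' = C*r + S*i) (hi : i' = -S*r + C*i) :
    (r + S/(1-C)*i) - (r' + S/(1-C)*i') = 2*r := by
  have h1 : (1:ℝ) - C ≠ 0 := sub_ne_zero.mpr (Ne.symm hC)
  field_simp
  linear_combination (C-1)*hr + (-S)*hi + r*h

private lemma td3 (a : ℝ) (p : MvPolynomial (Fin 4) ℝ) (hp : p.totalDegree ≤ 3) :
    (MvPolynomial.C a * p).totalDegree ≤ 3 :=
  (totalDegree_mul _ _).trans (by simpa [totalDegree_C])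

/-- Solvability of the homological equation `(1 − 𝒜⁻¹)S = V` for the sextupole
perturbation `V(x) = −x₁³/3 + x₁x₃²` under the non-resonance conditions
`ω₁, 3ω₁, ω₁+2ω₂, ω₁−2ω₂ ∉ 2πℤ`: there is a cubic polynomial `S` with
`S(x) − S(M(ω₁,ω₂)⁻¹x) = V(x)`. -/
theorem homological_equation_solvable (ω₁ ω₂ : ℝ)
    (h1 : ¬ ∃ k : ℤ, ω₁ = 2 * π * (k : ℝ))
    (h2 : ¬ ∃ k : ℤ, 3 * ω₁ = 2 * π * (k : ℝ))
    (h3 : ¬ ∃ k : ℤ, ω₁ + 2 * ω₂ = 2 * π * (k : ℝ))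
    (h4 : ¬ ∃ k : ℤ, ω₁ - 2 * ω₂ = 2 * π * (k : ℝ))
    (M : Matrix (Fin 4) (Fin 4) ℝ)
    (hM : M = Matrix.of
      ![![Real.cos ω₁, -Real.sin ω₁, 0, 0],
        ![Real.sin ω₁, Real.cos ω₁, 0, 0],
        ![0, 0, Real.cos ω₂, -Real.sin ω₂],
        ![0, 0, Real.sin ω₂, Real.cos ω₂]]) :
    ∃ P : MvPolynomial (Fin 4) ℝ, P.totalDegree ≤ 3 ∧
      ∀ x : Fin 4 → ℝ,
        MvPolynomial.eval x P - MvPolynomial.eval (M⁻¹.mulVec x) P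
          = -(x 0) ^ 3 / 3 + x 0 * (x 2) ^ 2 := by
  -- non-resonance ⇒ cosines ≠ 1
  have hcos : ∀ θ : ℝ, (¬ ∃ k : ℤ, θ = 2 * π * (k : ℝ)) → Real.cos θ ≠ 1 := by
    intro θ hθ hc
    obtain ⟨n, hn⟩ := (Real.cos_eq_one_iff θ).1 hc
    exact hθ ⟨n, by linarith [hn]⟩
  have hc1 : Real.cos ω₁ ≠ 1 := hcos _ h1
  have hc3 : Real.cos (3*ω₁) ≠ 1 := hcos _ h2
  have hcp : Real.cos (ω₁+2*ω₂) ≠ 1 := hcos _ h3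
  have hcm : Real.cos (ω₁-2*ω₂) ≠ 1 := hcos _ h4
  -- inverse matrix
  set N : Matrix (Fin 4) (Fin 4) ℝ := Matrix.of
      ![![Real.cos ω₁, Real.sin ω₁, 0, 0],
        ![-Real.sin ω₁, Real.cos ω₁, 0, 0],
        ![0, 0, Real.cos ω₂, Real.sin ω₂],
        ![0, 0, -Real.sin ω₂, Real.cos ω₂]] with hN
  have hMN : M * N = 1 := by
    ext i j
    fin_cases i <;> fin_cases j <;>
      simp only [hM, hN, Matrix.mul_apply, Fin.sum_univ_four, Matrix.one_apply,
        Matrix.of_apply, Matrix.cons_val', Matrix.cons_val_zero, Matrix.cons_val_one,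
        Matrix.head_cons, Matrix.cons_val_two, Matrix.cons_val_three, Matrix.tail_cons,
        Matrix.empty_val', Matrix.cons_val_fin_one, Matrix.head_fin_const, Fin.isValue] <;>
      norm_num [Fin.ext_iff] <;>
      first
        | ring1
        | linear_combination Real.sin_sq_add_cos_sq ω₁
        | linear_combination Real.sin_sq_add_cos_sq ω₂
  have hMinv : M⁻¹ = N := Matrix.inv_eq_right_inv hMN
  -- abbreviations
  set A1 : ℝ := Real.sin ω₁ / (1 - Real.cos ω₁) with hA1
  set A3 : ℝ := Real.sin (3*ω₁) / (1 - Real.cos (3*ω₁)) with hA3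
  set Ap : ℝ := Real.sin (ω₁+2*ω₂) / (1 - Real.cos (ω₁+2*ω₂)) with hAp
  set Am : ℝ := Real.sin (ω₁-2*ω₂) / (1 - Real.cos (ω₁-2*ω₂)) with hAm
  refine ⟨MvPolynomial.C (-1/6 : ℝ) * (X 0)^3
      + MvPolynomial.C (-(A3+A1)/8) * ((X 0)^2 * X 1)
      + MvPolynomial.C (A3/24 - A1/8) * (X 1)^3
      + MvPolynomial.C (1/2 : ℝ) * (X 0 * (X 2)^2)
      + MvPolynomial.C ((Ap+Am)/8 + A1/4) * (X 1 * (X 2)^2)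
      + MvPolynomial.C (A1/4 - (Ap+Am)/8) * (X 1 * (X 3)^2)
      + MvPolynomial.C ((Ap-Am)/4) * (X 0 * X 2 * X 3), ?_, ?_⟩
  · -- degree bound
    have hXp : ∀ (i : Fin 4) (n : ℕ), ((X i : MvPolynomial (Fin 4) ℝ)^n).totalDegree ≤ n :=
      fun i n => (totalDegree_pow _ _).trans (by simp [totalDegree_X])
    have hX : ∀ i : Fin 4, (X i : MvPolynomial (Fin 4) ℝ).totalDegree ≤ 1 :=
      fun i => le_of_eq (totalDegree_X i)
    have hmul : ∀ (p q : MvPolynomial (Fin 4) ℝ) (a b : ℕ), p.totalDegree ≤ a →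
        q.totalDegree ≤ b → (p*q).totalDegree ≤ a+b :=
      fun p q a b hp hq => (totalDegree_mul _ _).trans (add_le_add hp hq)
    repeat
      refine (totalDegree_add _ _).trans (max_le ?_ ?_)
    all_goals refine td3 _ _ ?_
    · exact hXp 0 3
    · exact hmul _ _ 2 1 (hXp 0 2) (hX 1)
    · exact hXp 1 3
    · exact hmul _ _ 1 2 (hX 0) (hXp 2 2)
    · exact hmul _ _ 1 2 (hX 1) (hXp 2 2)
    · exact hmul _ _ 1 2 (hX 1) (hXp 3 2)
    · exact hmul _ _ 2 1 (hmul _ _ 1 1 (hX 0) (hX 2)) (hX 3)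
  · intro x
    have hv : M⁻¹.mulVec x = ![Real.cos ω₁ * x 0 + Real.sin ω₁ * x 1,
        -Real.sin ω₁ * x 0 + Real.cos ω₁ * x 1,
        Real.cos ω₂ * x 2 + Real.sin ω₂ * x 3,
        -Real.sin ω₂ * x 2 + Real.cos ω₂ * x 3] := by
      rw [hMinv]
      funext i
      fin_cases i <;>
        simp [hN, Matrix.mulVec, dotProduct, Fin.sum_univ_four]
    rw [hv]
    simp only [map_add, map_mul, map_pow, eval_C, eval_X, Matrix.cons_val_zero,
      Matrix.cons_val_one, Matrix.head_cons, Matrix.cons_val_two, Matrix.tail_cons,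
      Matrix.cons_val_three]
    -- local names
    set c1 := Real.cos ω₁; set s1 := Real.sin ω₁
    set c2 := Real.cos ω₂; set s2 := Real.sin ω₂
    set x0 := x 0; set x1 := x 1; set x2 := x 2; set x3 := x 3
    set y0 := c1 * x0 + s1 * x1; set y1 := -s1 * x0 + c1 * x1
    set y2 := c2 * x2 + s2 * x3; set y3 := -s2 * x2 + c2 * x3
    -- transformation identities
    have p1 := Real.sin_sq_add_cos_sq ω₁
    have p2 := Real.sin_sq_add_cos_sq ω₂
    have hr3 : y0^3 - 3*y0*y1^2
        = Real.cos (3*ω₁) * (x0^3 - 3*x0*x1^2) + Real.sin (3*ω₁) * (3*x0^2*x1 - x1^3) := by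
      rw [Real.cos_three_mul, Real.sin_three_mul]
      linear_combination ((-3:ℝ)*s1*x1^3 + 9*s1*x0^2*x1 + 9*c1*x0*x1^2 + (-3:ℝ)*c1*x0^3) * p1
    have hi3 : 3*y0^2*y1 - y1^3
        = -Real.sin (3*ω₁) * (x0^3 - 3*x0*x1^2) + Real.cos (3*ω₁) * (3*x0^2*x1 - x1^3) := by
      rw [Real.cos_three_mul, Real.sin_three_mul]
      linear_combination (9*s1*x0*x1^2 + (-3:ℝ)*s1*x0^3 + 3*c1*x1^3 + (-9:ℝ)*c1*x0^2*x1) * p1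
    have hr1 : (y0^2+y1^2)*y0 = c1 * ((x0^2+x1^2)*x0) + s1 * ((x0^2+x1^2)*x1) := by
      linear_combination (s1*x1^3 + s1*x0^2*x1 + c1*x0*x1^2 + c1*x0^3) * p1
    have hi1 : (y0^2+y1^2)*y1 = -s1 * ((x0^2+x1^2)*x0) + c1 * ((x0^2+x1^2)*x1) := by
      linear_combination ((-1:ℝ)*s1*x0*x1^2 + (-1:ℝ)*s1*x0^3 + c1*x1^3 + c1*x0^2*x1) * p1
    have hrp : y0*(y2^2-y3^2) - 2*y1*y2*y3
        = Real.cos (ω₁+2*ω₂) * (x0*(x2^2-x3^2) - 2*x1*x2*x3)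
          + Real.sin (ω₁+2*ω₂) * (x1*(x2^2-x3^2) + 2*x0*x2*x3) := by
      rw [Real.cos_add, Real.sin_add, Real.cos_two_mul, Real.sin_two_mul]
      linear_combination (s1*x1*x3^2 - s1*x1*x2^2 - 2*s1*x0*x2*x3 + 2*c1*x1*x2*x3
        + c1*x0*x3^2 - c1*x0*x2^2) * p2
    have hip : y1*(y2^2-y3^2) + 2*y0*y2*y3
        = -Real.sin (ω₁+2*ω₂) * (x0*(x2^2-x3^2) - 2*x1*x2*x3)
          + Real.cos (ω₁+2*ω₂) * (x1*(x2^2-x3^2) + 2*x0*x2*x3) := by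
      rw [Real.cos_add, Real.sin_add, Real.cos_two_mul, Real.sin_two_mul]
      linear_combination ((-2:ℝ)*s1*x1*x2*x3 - s1*x0*x3^2 + s1*x0*x2^2 + c1*x1*x3^2
        - c1*x1*x2^2 - 2*c1*x0*x2*x3) * p2
    have hrm : y0*(y2^2-y3^2) + 2*y1*y2*y3
        = Real.cos (ω₁-2*ω₂) * (x0*(x2^2-x3^2) + 2*x1*x2*x3)
          + Real.sin (ω₁-2*ω₂) * (x1*(x2^2-x3^2) - 2*x0*x2*x3) := by
      rw [Real.cos_sub, Real.sin_sub, Real.cos_two_mul, Real.sin_two_mul]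
      linear_combination (s1*x1*x3^2 - s1*x1*x2^2 + 2*s1*x0*x2*x3 - 2*c1*x1*x2*x3
        + c1*x0*x3^2 - c1*x0*x2^2) * p2
    have him : y1*(y2^2-y3^2) - 2*y0*y2*y3
        = -Real.sin (ω₁-2*ω₂) * (x0*(x2^2-x3^2) + 2*x1*x2*x3)
          + Real.cos (ω₁-2*ω₂) * (x1*(x2^2-x3^2) - 2*x0*x2*x3) := by
      rw [Real.cos_sub, Real.sin_sub, Real.cos_two_mul, Real.sin_two_mul]
      linear_combination (2*s1*x1*x2*x3 - s1*x0*x3^2 + s1*x0*x2^2 + c1*x1*x3^2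
        - c1*x1*x2^2 + 2*c1*x0*x2*x3) * p2
    have hrc : y0*(y2^2+y3^2) = c1 * (x0*(x2^2+x3^2)) + s1 * (x1*(x2^2+x3^2)) := by
      linear_combination (s1*x1*x3^2 + s1*x1*x2^2 + c1*x0*x3^2 + c1*x0*x2^2) * p2
    have hic : y1*(y2^2+y3^2) = -s1 * (x0*(x2^2+x3^2)) + c1 * (x1*(x2^2+x3^2)) := by
      linear_combination ((-1:ℝ)*s1*x0*x3^2 - s1*x0*x2^2 + c1*x1*x3^2 + c1*x1*x2^2) * p2
    -- homological pieces
    have e3 := key_hom (Real.cos (3*ω₁)) (Real.sin (3*ω₁)) _ _ _ _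
      (Real.sin_sq_add_cos_sq _) hc3 hr3 hi3
    have e1 := key_hom c1 s1 _ _ _ _ p1 hc1 hr1 hi1
    have ep := key_hom (Real.cos (ω₁+2*ω₂)) (Real.sin (ω₁+2*ω₂)) _ _ _ _
      (Real.sin_sq_add_cos_sq _) hcp hrp hip
    have em := key_hom (Real.cos (ω₁-2*ω₂)) (Real.sin (ω₁-2*ω₂)) _ _ _ _
      (Real.sin_sq_add_cos_sq _) hcm hrm him
    have ec := key_hom c1 s1 _ _ _ _ p1 hc1 hrc hic
    linear_combination (-1/24 : ℝ) * e3 + (-1/8 : ℝ) * e1 + (1/8 : ℝ) * ep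
      + (1/8 : ℝ) * em + (1/4 : ℝ) * ec
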